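/- The Riemann theta function θ : ℂ^g → ℂ is an entire function of g complex variables, i.e., it is complex (Fréchet) differentiable at every point of ℂ^g. -/

import Mathlib

open Matrix Complex Real

/-- The term of the Riemann theta series associated with the `g×g` matrix `B`,
evaluated at `u ∈ ℂ^g` and indexed by the integer vector `n ∈ ℤ^g`:
`exp(πi·nᵀBn + 2πi·nᵀu)`. -/
noncomputable def riemannThetaTerm {g : ℕ} (B : Matrix (Fin g) (Fin g) ℂ)
    (u : Fin g → ℂ) (n : Fin g → ℤ) : ℂ :=
  Complex.exp ((Real.pi : ℂ) * Complex.I *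
      (dotProduct (fun i => (n i : ℂ)) (B.mulVec fun i => (n i : ℂ))) +
    2 * (Real.pi : ℂ) * Complex.I * dotProduct (fun i => (n i : ℂ)) u)

/-- The Riemann theta function associated with `B`. -/
noncomputable def riemannTheta {g : ℕ} (B : Matrix (Fin g) (Fin g) ℂ)
    (u : Fin g → ℂ) : ℂ :=
  ∑' n : Fin g → ℤ, riemannThetaTerm B u n

/-!
Positive definiteness of `Im B` gives `c > 0` with `nᵀ (Im B) n ≥ c |n|²`. Hence, for `‖u‖ ≤ R`,
the `n`-th term has modulus at most `∏ i, exp (-π (c nᵢ² - 2 R |nᵢ|))`, a product of the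
one-variable Jacobi theta majorants, which is summable over `ℤ^g`. The derivative of the `n`-th
term is the term times `2πi ⟨n, ·⟩`, and the factor `2π ∑ |nᵢ| ≤ exp (2π ∑ |nᵢ|)` is absorbed by
replacing `R` with `R + 1`. Termwise differentiation on a ball then gives holomorphy.
-/

theorem Summable.pi_prod_of_nonneg {ι α : Type*} [Fintype ι] {f : α → ℝ} (hf : Summable f)
    (hf₀ : 0 ≤ f) : Summable fun x : ι → α => ∏ i, f (x i) := by
  classical
  refine summable_of_sum_le (fun x => Finset.prod_nonneg fun i _ => hf₀ _)
    (c := ∏ _i : ι, ∑' a, f a) fun s => ?_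
  calc ∑ x ∈ s, ∏ i, f (x i)
      ≤ ∑ x ∈ Fintype.piFinset fun i => s.image (· i), ∏ i, f (x i) :=
        Finset.sum_le_sum_of_subset_of_nonneg
          (fun x hx => Fintype.mem_piFinset.2 fun i => Finset.mem_image_of_mem _ hx)
          fun x _ _ => Finset.prod_nonneg fun i _ => hf₀ _
    _ = ∏ i, ∑ a ∈ s.image (· i), f a := (Finset.prod_univ_sum _ fun _ => f).symm
    _ ≤ ∏ _i : ι, ∑' a, f a :=
        Finset.prod_le_prod (fun i _ => Finset.sum_nonneg fun a _ => hf₀ a)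
          fun i _ => hf.sum_le_tsum _ fun a _ => hf₀ a

theorem exists_pos_mul_norm_sq_le {E : Type*} [NormedAddCommGroup E] [NormedSpace ℝ E]
    [FiniteDimensional ℝ E] {Q : E → ℝ} (hQ : Continuous Q)
    (hQ_smul : ∀ (t : ℝ) (v : E), Q (t • v) = t ^ 2 * Q v) (hQ_pos : ∀ v ≠ 0, 0 < Q v) :
    ∃ c > 0, ∀ v, c * ‖v‖ ^ 2 ≤ Q v := by
  have hQ₀ : Q 0 = 0 := by simpa using hQ_smul 0 0
  cases subsingleton_or_nontrivial E with
  | inl _ => exact ⟨1, one_pos, fun v => by simp [Subsingleton.elim v 0, hQ₀]⟩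
  | inr _ =>
  obtain ⟨w, hw, hw_min⟩ := (isCompact_sphere (0 : E) 1).exists_isMinOn
    (NormedSpace.sphere_nonempty.2 zero_le_one) hQ.continuousOn
  refine ⟨Q w, hQ_pos w (ne_zero_of_mem_unit_sphere ⟨w, hw⟩), fun v => ?_⟩
  rcases eq_or_ne v 0 with rfl | hv
  · simp [hQ₀]
  have hv' : 0 < ‖v‖ := norm_pos_iff.2 hv
  have hmin : Q w ≤ Q (‖v‖⁻¹ • v) := hw_min (by simp [norm_smul, hv'.ne'])
  calc Q w * ‖v‖ ^ 2 ≤ Q (‖v‖⁻¹ • v) * ‖v‖ ^ 2 := by gcongr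
    _ = Q v := by rw [hQ_smul]; field_simp

theorem Matrix.PosDef.exists_pos_mul_dotProduct_self_le {ι : Type*} [Fintype ι]
    {S : Matrix ι ι ℝ} (hS : S.PosDef) : ∃ c > 0, ∀ v : ι → ℝ, c * (v ⬝ᵥ v) ≤ v ⬝ᵥ S *ᵥ v := by
  obtain ⟨c, hc, h⟩ := exists_pos_mul_norm_sq_le (E := EuclideanSpace ℝ ι)
    (Q := fun x => x.ofLp ⬝ᵥ S *ᵥ x.ofLp) (by fun_prop)
    (fun t v => by
      simp only [WithLp.ofLp_smul, mulVec_smul, dotProduct_smul, smul_dotProduct, smul_eq_mul]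
      ring)
    (fun v hv => by simpa using hS.dotProduct_mulVec_pos (x := v.ofLp) (by simpa using hv))
  refine ⟨c, hc, fun v => ?_⟩
  have hv := h (WithLp.toLp 2 v)
  rw [EuclideanSpace.real_norm_sq_eq] at hv
  simpa [dotProduct, sq] using hv

section DotProductCLM

variable {𝕜 ι : Type*} [NontriviallyNormedField 𝕜] [Fintype ι]

noncomputable def Matrix.dotProductCLM (v : ι → 𝕜) : (ι → 𝕜) →L[𝕜] 𝕜 :=
  ∑ i, v i • ContinuousLinearMap.proj i

@[simp]
theorem Matrix.dotProductCLM_apply (v x : ι → 𝕜) : dotProductCLM v x = v ⬝ᵥ x := by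
  simp [dotProductCLM, dotProduct]

theorem Matrix.norm_dotProductCLM_le (v : ι → 𝕜) : ‖dotProductCLM v‖ ≤ ∑ i, ‖v i‖ := by
  refine ContinuousLinearMap.opNorm_le_bound _ (by positivity) fun x => ?_
  calc ‖dotProductCLM v x‖ ≤ ∑ i, ‖v i‖ * ‖x i‖ := by
        simpa [dotProduct] using norm_sum_le_of_le Finset.univ fun i _ => norm_mul_le (v i) (x i)
    _ ≤ ∑ i, ‖v i‖ * ‖x‖ := by gcongr with i; exact norm_le_pi_norm x i
    _ = (∑ i, ‖v i‖) * ‖x‖ := (Finset.sum_mul ..).symm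

end DotProductCLM

noncomputable def thetaMajorant (T S : ℝ) (k : ℤ) : ℝ :=
  Real.exp (-π * (T * k ^ 2 - 2 * S * |(k : ℝ)|))

theorem thetaMajorant_nonneg (T S : ℝ) : 0 ≤ thetaMajorant T S :=
  fun _ => (Real.exp_pos _).le

theorem summable_thetaMajorant (S : ℝ) {T : ℝ} (hT : 0 < T) : Summable (thetaMajorant T S) := by
  refine (summable_pow_mul_jacobiTheta₂_term_bound S hT 0).congr fun k => ?_
  simp [thetaMajorant]

theorem thetaMajorant_mul_exp (T S : ℝ) (k : ℤ) :
    thetaMajorant T S k * Real.exp (2 * π * |(k : ℝ)|) = thetaMajorant T (S + 1) k := by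
  rw [thetaMajorant, thetaMajorant, ← Real.exp_add]
  ring_nf

section RiemannTheta

variable {g : ℕ} {B : Matrix (Fin g) (Fin g) ℂ}

theorem hasFDerivAt_riemannThetaTerm (n : Fin g → ℤ) (u : Fin g → ℂ) :
    HasFDerivAt (riemannThetaTerm B · n)
      (riemannThetaTerm B u n • (2 * π * I) • dotProductCLM fun i => (n i : ℂ)) u := by
  set L := (2 * π * I) • dotProductCLM fun i => (n i : ℂ)
  have hterm : (riemannThetaTerm B · n) =
      fun v => cexp (π * I * ((fun i => (n i : ℂ)) ⬝ᵥ B *ᵥ fun i => (n i : ℂ)) + L v) := by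
    funext v
    simp [riemannThetaTerm, L, mul_assoc]
  rw [show riemannThetaTerm B u n = _ from congrFun hterm u, hterm]
  exact (L.hasFDerivAt.const_add _).cexp

theorem norm_riemannThetaTerm (u : Fin g → ℂ) (n : Fin g → ℤ) :
    ‖riemannThetaTerm B u n‖ =
      Real.exp (-π * ((fun i => (n i : ℝ)) ⬝ᵥ B.map im *ᵥ fun i => (n i : ℝ))
        - 2 * π * ((fun i => (n i : ℝ)) ⬝ᵥ fun i => (u i).im)) := by
  rw [riemannThetaTerm, Complex.norm_exp]
  congr 1
  simp [dotProduct, mulVec, Complex.re_sum, Finset.mul_sum]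
  ring

theorem norm_riemannThetaTerm_le {c R : ℝ}
    (hc : ∀ v : Fin g → ℝ, c * (v ⬝ᵥ v) ≤ v ⬝ᵥ B.map im *ᵥ v) {u : Fin g → ℂ} (hu : ‖u‖ ≤ R)
    (n : Fin g → ℤ) : ‖riemannThetaTerm B u n‖ ≤ ∏ i, thetaMajorant c R (n i) := by
  set m : Fin g → ℝ := fun i => (n i : ℝ)
  have hlin : -(m ⬝ᵥ fun i => (u i).im) ≤ R * ∑ i, |m i| := by
    calc -(m ⬝ᵥ fun i => (u i).im) ≤ ∑ i, |m i| * R := by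
          refine (neg_le_abs _).trans <| (Finset.abs_sum_le_sum_abs _ _).trans ?_
          gcongr with i
          rw [abs_mul]
          gcongr
          exact (abs_im_le_norm _).trans <| (norm_le_pi_norm u i).trans hu
      _ = R * ∑ i, |m i| := by rw [Finset.mul_sum]; simp_rw [mul_comm]
  have hquad : π * (c * (m ⬝ᵥ m)) ≤ π * (m ⬝ᵥ B.map im *ᵥ m) := by gcongr; exact hc m
  have hsum : ∑ i, -π * (c * m i ^ 2 - 2 * R * |m i|) =
      -π * (c * (m ⬝ᵥ m)) + 2 * π * (R * ∑ i, |m i|) := by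
    simp only [dotProduct, Finset.mul_sum, ← Finset.sum_add_distrib]
    congr 1; ext i; ring
  simp only [thetaMajorant, ← Real.exp_sum, norm_riemannThetaTerm, Real.exp_le_exp]
  rw [hsum]
  nlinarith [pi_pos]

theorem norm_fderiv_riemannThetaTerm_le {c R : ℝ}
    (hc : ∀ v : Fin g → ℝ, c * (v ⬝ᵥ v) ≤ v ⬝ᵥ B.map im *ᵥ v) {u : Fin g → ℂ} (hu : ‖u‖ ≤ R)
    (n : Fin g → ℤ) :
    ‖riemannThetaTerm B u n • (2 * π * I) • dotProductCLM fun i => (n i : ℂ)‖ ≤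
      ∏ i, thetaMajorant c (R + 1) (n i) := by
  have hexp : 2 * π * ∑ i, |(n i : ℝ)| ≤ ∏ i, Real.exp (2 * π * |(n i : ℝ)|) := by
    rw [← Real.exp_sum, ← Finset.mul_sum]
    linarith [Real.add_one_le_exp (2 * π * ∑ i, |(n i : ℝ)|)]
  calc _ ≤ ‖riemannThetaTerm B u n‖ * (2 * π * ∑ i, |(n i : ℝ)|) := by
        rw [norm_smul, norm_smul]
        gcongr
        · simp [abs_of_pos pi_pos]
        · simpa using norm_dotProductCLM_le fun i => (n i : ℂ)
    _ ≤ (∏ i, thetaMajorant c R (n i)) * ∏ i, Real.exp (2 * π * |(n i : ℝ)|) := by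
        gcongr
        · exact Finset.prod_nonneg fun i _ => thetaMajorant_nonneg c R _
        · exact norm_riemannThetaTerm_le hc hu n
    _ = ∏ i, thetaMajorant c (R + 1) (n i) := by
        simp only [← Finset.prod_mul_distrib, thetaMajorant_mul_exp]

end RiemannTheta

theorem riemannTheta_differentiable_general (g : ℕ)
    (B : Matrix (Fin g) (Fin g) ℂ)
    (hpos : (B.map Complex.im).PosDef) :
    Differentiable ℂ (riemannTheta B) := by
  obtain ⟨c, hc₀, hc⟩ := hpos.exists_pos_mul_dotProduct_self_le
  intro u₀
  set R := ‖u₀‖ + 1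
  have hball : ∀ u ∈ Metric.ball u₀ 1, ‖u‖ ≤ R := fun u hu =>
    (norm_le_insert' u u₀).trans (by rw [← dist_eq_norm]; linarith [Metric.mem_ball.1 hu])
  have hmajorant (S : ℝ) : Summable fun n : Fin g → ℤ => ∏ i, thetaMajorant c S (n i) :=
    (summable_thetaMajorant S hc₀).pi_prod_of_nonneg (thetaMajorant_nonneg c S)
  have hu₀ : u₀ ∈ Metric.ball u₀ 1 := Metric.mem_ball_self one_pos
  have hsum₀ : Summable (riemannThetaTerm B u₀) :=
    (hmajorant R).of_norm_bounded (norm_riemannThetaTerm_le hc (hball u₀ hu₀))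
  exact (hasFDerivAt_tsum_of_isPreconnected (hmajorant (R + 1)) Metric.isOpen_ball
    (convex_ball u₀ 1).isPreconnected (fun n u _ => hasFDerivAt_riemannThetaTerm n u)
    (fun n u hu => norm_fderiv_riemannThetaTerm_le hc (hball u hu) n) hu₀ hsum₀
    hu₀).differentiableAt

/-- The Riemann theta function is an entire function of `g` complex variables. -/
theorem riemannTheta_differentiable (g : ℕ) (hg : 1 ≤ g)
    (B : Matrix (Fin g) (Fin g) ℂ) (hsym : B.IsSymm)
    (hpos : (B.map Complex.im).PosDef) :
    Differentiable ℂ (riemannTheta B) :=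
  riemannTheta_differentiable_general g B hpos
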